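/- Let p be a prime, G a graph, Q = {0,1,...,p-1} ⊆ V(G), and suppose the cycle (0,1,...,p-1) appears in the cycle decomposition of some automorphism α of G. Suppose β ∈ Aut(G) fixes Q setwise and is not the identity on Q. If Q is partitioned into two nonempty sets A and B, then there exists 0 < ℓ < p such that the automorphism α^{-ℓ} β α^{ℓ} maps some vertex of A to some vertex of B. -/

import Mathlib

open Function

section Defs

universe u₁ u₂ u₃

variable {V : Type u₁} {W : Type u₂} {C : Type u₃}

/-- A coloring is distinguishing if only the identity automorphism preserves it. -/
def DistCol (G : SimpleGraph V) (c : V → C) : Prop :=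
  ∀ φ : G ≃g G, (∀ x, c (φ x) = c x) → ∀ x, φ x = x

/-- The distinguishing number: the least number of colors admitting a distinguishing coloring. -/
noncomputable def Dnum (G : SimpleGraph V) : ℕ :=
  sInf {k | ∃ c : V → Fin k, DistCol G c}

/-- The distinguishing threshold: the least `k` such that every `k`-coloring is distinguishing. -/
noncomputable def theta (G : SimpleGraph V) : ℕ :=
  sInf {k | ∀ c : V → Fin k, DistCol G c}

/-- The number of non-equivalent distinguishing colorings with at most `k` colors. -/
noncomputable def Phi (G : SimpleGraph V) (k : ℕ) : ℕ :=
  Nat.card (Quot fun c₁ c₂ : {c : V → Fin k // DistCol G c} =>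
    ∃ φ : G ≃g G, ∀ x, c₁.1 x = c₂.1 (φ x))

/-- Rooted version of distinguishing: only automorphisms fixing `v` are considered. -/
def DistColR (G : SimpleGraph V) (v : V) (c : V → C) : Prop :=
  ∀ φ : G ≃g G, φ v = v → (∀ x, c (φ x) = c x) → ∀ x, φ x = x

noncomputable def DnumR (G : SimpleGraph V) (v : V) : ℕ :=
  sInf {k | ∃ c : V → Fin k, DistColR G v c}

noncomputable def thetaR (G : SimpleGraph V) (v : V) : ℕ :=
  sInf {k | ∀ c : V → Fin k, DistColR G v c}

noncomputable def PhiR (G : SimpleGraph V) (v : V) (k : ℕ) : ℕ :=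
  Nat.card (Quot fun c₁ c₂ : {c : V → Fin k // DistColR G v c} =>
    ∃ φ : G ≃g G, φ v = v ∧ ∀ x, c₁.1 x = c₂.1 (φ x))

/-- A vertex `u` is steady if every automorphism of `G - u` extends to an
automorphism of `G` fixing `u`. -/
def Steady (G : SimpleGraph V) (u : V) : Prop :=
  ∀ ψ : G.induce {w : V | w ≠ u} ≃g G.induce {w : V | w ≠ u},
    ∃ φ : G ≃g G, φ u = u ∧ ∀ w : {w : V | w ≠ u}, φ ↑w = ↑(ψ w)

/-- The vertex-sum of the graphs `G i` (all containing the vertex `u`) at `u`: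
`none` is the central vertex obtained by identifying the copies of `u`. -/
def VertexSum {t : ℕ} (G : Fin t → SimpleGraph V) (u : V) :
    SimpleGraph (Option (Fin t × {w : V // w ≠ u})) where
  Adj x y :=
    (∃ i w, x = none ∧ y = some (i, w) ∧ (G i).Adj u w.1) ∨
    (∃ i w, y = none ∧ x = some (i, w) ∧ (G i).Adj u w.1) ∨
    (∃ i w z, x = some (i, w) ∧ y = some (i, z) ∧ (G i).Adj w.1 z.1)
  symm := by
    constructor
    rintro x y (⟨i, w, hx, hy, h⟩ | ⟨i, w, hy, hx, h⟩ | ⟨i, w, z, hx, hy, h⟩)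
    · exact Or.inr (Or.inl ⟨i, w, hx, hy, h⟩)
    · exact Or.inl ⟨i, w, hy, hx, h⟩
    · exact Or.inr (Or.inr ⟨i, z, w, hy, hx, h.symm⟩)
  loopless := by
    constructor
    rintro x (⟨i, w, hx, hy, h⟩ | ⟨i, w, hy, hx, h⟩ | ⟨i, w, z, hx, hy, h⟩)
    · rw [hx] at hy; exact nomatch hy
    · rw [hy] at hx; exact nomatch hx.symm
    · rw [hx] at hy
      obtain rfl : w = z := by simpa using hy
      exact h.ne rfl

/-- Disjoint union of the graphs `H i`. -/
def SigmaUnion {t : ℕ} (H : Fin t → SimpleGraph W) : SimpleGraph (Fin t × W) where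
  Adj x y := x.1 = y.1 ∧ (H x.1).Adj x.2 y.2
  symm := by
    constructor
    rintro ⟨i, a⟩ ⟨j, b⟩ ⟨rfl, h⟩
    exact ⟨rfl, h.symm⟩
  loopless := by constructor; rintro x ⟨-, h⟩; exact h.ne rfl

/-- A graph is 2-connected if it has at least 3 vertices and no cut vertex. -/
def TwoConnected (G : SimpleGraph V) [Fintype V] : Prop :=
  3 ≤ Fintype.card V ∧ ∀ x : V, (G.induce {w : V | w ≠ x}).Connected

/-- The smooth rooted product `G_s(H)` where `H` is rooted at `v`. -/
def RootedProd (G : SimpleGraph V) (H : SimpleGraph W) (v : W) :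
    SimpleGraph (V × W) where
  Adj x y := (x.1 = y.1 ∧ H.Adj x.2 y.2) ∨ (x.2 = v ∧ y.2 = v ∧ G.Adj x.1 y.1)
  symm := by
    constructor
    rintro x y (⟨h1, h2⟩ | ⟨h1, h2, h3⟩)
    · exact Or.inl ⟨h1.symm, h2.symm⟩
    · exact Or.inr ⟨h2, h1, h3.symm⟩
  loopless := by constructor; rintro x (⟨-, h⟩ | ⟨-, -, h⟩) <;> exact h.ne rfl

/-- The corona product `G ⊙ H`: the vertex `(g, none)` is the vertex `g` of `G`,
and `(g, some h)` is the vertex `h` in the copy of `H` attached to `g`. -/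
def Corona (G : SimpleGraph V) (H : SimpleGraph W) :
    SimpleGraph (V × Option W) where
  Adj x y :=
    (x.2 = none ∧ y.2 = none ∧ G.Adj x.1 y.1) ∨
    (x.1 = y.1 ∧ ∃ a b, x.2 = some a ∧ y.2 = some b ∧ H.Adj a b) ∨
    (x.1 = y.1 ∧ x.2 = none ∧ ∃ a, y.2 = some a) ∨
    (x.1 = y.1 ∧ y.2 = none ∧ ∃ a, x.2 = some a)
  symm := by
    constructor
    rintro x y (⟨h1, h2, h3⟩ | ⟨h1, a, b, h2, h3, h4⟩ | ⟨h1, h2, h3⟩ | ⟨h1, h2, h3⟩)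
    · exact Or.inl ⟨h2, h1, h3.symm⟩
    · exact Or.inr (Or.inl ⟨h1.symm, b, a, h3, h2, h4.symm⟩)
    · exact Or.inr (Or.inr (Or.inr ⟨h1.symm, h2, h3⟩))
    · exact Or.inr (Or.inr (Or.inl ⟨h1.symm, h2, h3⟩))
  loopless := by
    constructor
    rintro x (⟨-, -, h⟩ | ⟨-, a, b, h2, h3, h4⟩ | ⟨-, h2, a, h3⟩ | ⟨-, h2, a, h3⟩)
    · exact h.ne rfl
    · rw [h2] at h3; exact h4.ne (Option.some.inj h3)
    · rw [h2] at h3; exact nomatch h3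
    · rw [h2] at h3; exact nomatch h3

/-- The lexicographic product `G ∘ H`. -/
def LexProd (G : SimpleGraph V) (H : SimpleGraph W) : SimpleGraph (V × W) where
  Adj x y := G.Adj x.1 y.1 ∨ (x.1 = y.1 ∧ H.Adj x.2 y.2)
  symm := by
    constructor
    rintro x y (h | ⟨h1, h2⟩)
    exacts [Or.inl h.symm, Or.inr ⟨h1.symm, h2.symm⟩]
  loopless := by constructor; rintro x (h | ⟨-, h⟩) <;> exact h.ne rfl

/-- The number of cycles (orbits, counting fixed points) of a permutation. -/
noncomputable def numCycles (e : Equiv.Perm V) : ℕ :=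
  Nat.card (Quot fun x y : V => ∃ n : ℤ, (e ^ n) x = y)

end Defs

/- The key point is that conjugating `β` by `α^ℓ` corresponds on `Q` to conjugating the
permutation `f` that `β` induces on `ZMod p` by the translation `x ↦ x + ℓ`. If no such conjugate
moved a point of `A` out of `A`, then for every `z` moved by `f`, with `d = f z - z`, the set `A`
would be closed under `x ↦ x + d` at every point except `z`. As `d` generates `ZMod p`, a proper
nonempty subset cannot be closed under `+ d` everywhere, so `z` is the unique exit: `z ∈ A` and
`f z = z + d ∉ A`. Applied to the moved point `f z` this gives `f z ∈ A`, a contradiction. -/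

namespace ZMod

variable {p : ℕ} [Fact p.Prime]

theorem mem_of_forall_add_mem {S : Set (ZMod p)} {d : ZMod p} (hd : d ≠ 0)
    (hS : ∀ x ∈ S, x + d ∈ S) {a : ZMod p} (ha : a ∈ S) (b : ZMod p) : b ∈ S := by
  have hsteps : ∀ n : ℕ, a + n * d ∈ S := by
    intro n
    induction n with
    | zero => simpa using ha
    | succ n ih => simpa [add_mul, add_assoc] using hS _ ih
  simpa [hd] using hsteps ((b - a) / d).val

theorem mem_and_add_notMem_of_forall_add_mem_of_ne {A : Set (ZMod p)} {d z : ZMod p}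
    (hd : d ≠ 0) (hA : A.Nonempty) (hAc : ∃ b, b ∉ A) (hstep : ∀ x ∈ A, x ≠ z → x + d ∈ A) :
    z ∈ A ∧ z + d ∉ A := by
  obtain ⟨a, ha⟩ := hA
  obtain ⟨b, hb⟩ := hAc
  by_contra hexit
  refine hb (mem_of_forall_add_mem hd (fun x hx => ?_) ha b)
  by_cases hxz : x = z
  · subst hxz
    by_contra hout
    exact hexit ⟨hx, hout⟩
  · exact hstep x hx hxz

theorem exists_sub_apply_add_notMem {f : ZMod p → ZMod p} (hf : Injective f)
    (hmoved : ∃ z, f z ≠ z) {A : Set (ZMod p)} (hA : A.Nonempty) (hAc : ∃ b, b ∉ A) :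
    ∃ t ≠ 0, ∃ a ∈ A, f (a + t) - t ∉ A := by
  by_contra! hclosed
  have hexit : ∀ z, f z ≠ z → z ∈ A ∧ f z ∉ A := by
    intro z hz
    have hstep : ∀ x ∈ A, x ≠ z → x + (f z - z) ∈ A := by
      intro x hx hxz
      have := hclosed (z - x) (sub_ne_zero.mpr hxz.symm) x hx
      rwa [add_sub_cancel, sub_sub_eq_add_sub, add_comm, add_sub_assoc] at this
    simpa using mem_and_add_notMem_of_forall_add_mem_of_ne (sub_ne_zero.mpr hz) hA hAc hstep
  obtain ⟨z, hz⟩ := hmoved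
  exact (hexit z hz).2 (hexit (f z) (fun h => hz (hf h))).1

end ZMod

theorem Equiv.Perm.pow_apply_of_apply_eq_add_one {V R : Type*} [AddMonoidWithOne R]
    {e : Equiv.Perm V} {ι : R → V} (he : ∀ i, e (ι i) = ι (i + 1)) (n : ℕ) (a : R) :
    (e ^ n) (ι a) = ι (a + n) := by
  induction n generalizing a with
  | zero => simp
  | succ n ih => rw [pow_succ', Equiv.Perm.mul_apply, ih, he, Nat.cast_succ, add_assoc]

/-- if the cycle `(0,1,…,p-1)` (encoded by the injection `ι : ZMod p → V`)
appears in the cycle decomposition of `α`, `β` fixes `Q = range ι` setwise and is not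
the identity on `Q`, and `A ∪ B` is a partition of `Q` into nonempty sets, then some
conjugate `α^{-ℓ} β α^{ℓ}` (with `0 < ℓ < p`) maps a vertex of `A` to a vertex of `B`. -/
theorem stmt2 {V : Type*} (p : ℕ) (hp : p.Prime) (G : SimpleGraph V)
    (ι : ZMod p → V) (hι : Function.Injective ι)
    (α β : G ≃g G)
    (hα : ∀ i : ZMod p, α (ι i) = ι (i + 1))
    (hβQ : ∀ i : ZMod p, ∃ j : ZMod p, β (ι i) = ι j)
    (hβne : ∃ i : ZMod p, β (ι i) ≠ ι i)
    (A B : Set (ZMod p)) (hA : A.Nonempty) (hB : B.Nonempty)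
    (hunion : A ∪ B = Set.univ) (hdisj : A ∩ B = ∅) :
    ∃ ℓ : ℕ, 0 < ℓ ∧ ℓ < p ∧ ∃ a ∈ A, ∃ b ∈ B,
      (α.toEquiv ^ ℓ).symm (β ((α.toEquiv ^ ℓ) (ι a))) = ι b := by
  have : Fact p.Prime := ⟨hp⟩
  choose f hf using hβQ
  have hf_inj : Injective f := fun i j h => hι (β.injective (by rw [hf, hf, h]))
  have hpow := Equiv.Perm.pow_apply_of_apply_eq_add_one (e := α.toEquiv) hα
  have hconj (ℓ : ℕ) (a : ZMod p) :
      (α.toEquiv ^ ℓ).symm (β ((α.toEquiv ^ ℓ) (ι a))) = ι (f (a + ℓ) - ℓ) := by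
    rw [hpow, hf, Equiv.symm_apply_eq, hpow, sub_add_cancel]
  have hBA : ∀ b ∈ B, b ∉ A := Set.disjoint_right.mp (Set.disjoint_iff_inter_eq_empty.mpr hdisj)
  obtain ⟨i, hi⟩ := hβne
  obtain ⟨t, ht, a, ha, hout⟩ := ZMod.exists_sub_apply_add_notMem hf_inj
    ⟨i, fun h => hi (by rw [hf, h])⟩ hA (hB.imp hBA)
  have hin : f (a + t) - t ∈ B := (Set.eq_univ_iff_forall.mp hunion _).resolve_left hout
  refine ⟨t.val, ZMod.val_pos.mpr ht, ZMod.val_lt t, a, ha, _, hin, ?_⟩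
  rw [hconj, ZMod.natCast_zmod_val]
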